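/- Suppose b⁺ ≥ (a⁺)² and b⁻ ≥ (a⁻)². Then for every K ∈ ℝⁿ one has β⁺(K) − (α⁺(K))² ≥ 0 and β⁻(K) − (α⁻(K))² ≥ 0. -/

import Mathlib

/-!
Write `Y = s + P'K` and `a(Y) = a⁺Y·1{Y ≥ 0} + a⁻Y·1{Y < 0}`. Then `α⁺ = E[ρ'P'K + a(Y)]`, and since
the two indicators are complementary, `β⁺` is the expectation of
`(ρ'P'K + a(Y))² + (b⁺ - (a⁺)²)Y²·1{Y ≥ 0} + (b⁻ - (a⁻)²)Y²·1{Y < 0}`.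
So `β⁺ - (α⁺)²` is a variance plus the expectation of a nonnegative quantity; the events
`{Y ≤ 0}` and `{Y > 0}` give `β⁻ - (α⁻)²` in the same way.
-/

open MeasureTheory

/-- `α⁺(K) = ρ'E[P']K + E[a⁺(s+P'K)·1{s+P'K ≥ 0}] + E[a⁻(s+P'K)·1{s+P'K < 0}]`. -/
noncomputable def alphaPlus {Ω : Type*} [MeasurableSpace Ω] (ℙ : Measure Ω) {n : ℕ}
    (P : Ω → EuclideanSpace ℝ (Fin n)) (s ρ' ap am : ℝ)
    (K : EuclideanSpace ℝ (Fin n)) : ℝ :=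
  let pk : Ω → ℝ := fun ω => inner ℝ (P ω) K
  ρ' * (∫ ω, pk ω ∂ℙ) +
  (∫ ω, ap * (s + pk ω) * (if 0 ≤ s + pk ω then (1:ℝ) else 0) ∂ℙ) +
  (∫ ω, am * (s + pk ω) * (if s + pk ω < 0 then (1:ℝ) else 0) ∂ℙ)

/-- `α⁻(K) = ρ'E[P']K + E[a⁺(s+P'K)·1{s+P'K ≤ 0}] + E[a⁻(s+P'K)·1{s+P'K > 0}]`. -/
noncomputable def alphaMinus {Ω : Type*} [MeasurableSpace Ω] (ℙ : Measure Ω) {n : ℕ}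
    (P : Ω → EuclideanSpace ℝ (Fin n)) (s ρ' ap am : ℝ)
    (K : EuclideanSpace ℝ (Fin n)) : ℝ :=
  let pk : Ω → ℝ := fun ω => inner ℝ (P ω) K
  ρ' * (∫ ω, pk ω ∂ℙ) +
  (∫ ω, ap * (s + pk ω) * (if s + pk ω ≤ 0 then (1:ℝ) else 0) ∂ℙ) +
  (∫ ω, am * (s + pk ω) * (if 0 < s + pk ω then (1:ℝ) else 0) ∂ℙ)

/-- The piecewise-linear feedback policy `u = K⁺·Y·1{Y ≥ 0} + K⁻·Y·1{Y < 0}`. -/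
noncomputable def uPol {n : ℕ} (Y : ℝ) (Kp Km : EuclideanSpace ℝ (Fin n)) :
    EuclideanSpace ℝ (Fin n) :=
  (Y * (if 0 ≤ Y then (1:ℝ) else 0)) • Kp + (Y * (if Y < 0 then (1:ℝ) else 0)) • Km

/-- `β⁺(K) = ρ'²K'E[PP']K + 2ρ'E[a⁺(s+P'K)(P'K)·1{s+P'K ≥ 0}]
+ 2ρ'E[a⁻(s+P'K)(P'K)·1{s+P'K < 0}] + E[b⁺(s+P'K)²·1{s+P'K ≥ 0}]
+ E[b⁻(s+P'K)²·1{s+P'K < 0}]`, with `K'E[PP']K = E[(P'K)²]`. -/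
noncomputable def betaPlus {Ω : Type*} [MeasurableSpace Ω] (ℙ : Measure Ω) {n : ℕ}
    (P : Ω → EuclideanSpace ℝ (Fin n)) (s ρ' ap am bp bm : ℝ)
    (K : EuclideanSpace ℝ (Fin n)) : ℝ :=
  let pk : Ω → ℝ := fun ω => inner ℝ (P ω) K
  ρ' ^ 2 * (∫ ω, (pk ω) ^ 2 ∂ℙ) +
  2 * ρ' * (∫ ω, ap * (s + pk ω) * pk ω * (if 0 ≤ s + pk ω then (1:ℝ) else 0) ∂ℙ) +
  2 * ρ' * (∫ ω, am * (s + pk ω) * pk ω * (if s + pk ω < 0 then (1:ℝ) else 0) ∂ℙ) +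
  (∫ ω, bp * (s + pk ω) ^ 2 * (if 0 ≤ s + pk ω then (1:ℝ) else 0) ∂ℙ) +
  (∫ ω, bm * (s + pk ω) ^ 2 * (if s + pk ω < 0 then (1:ℝ) else 0) ∂ℙ)

/-- `β⁻(K) = ρ'²K'E[PP']K + 2ρ'E[a⁺(s+P'K)(P'K)·1{s+P'K ≤ 0}]
+ 2ρ'E[a⁻(s+P'K)(P'K)·1{s+P'K > 0}] + E[b⁺(s+P'K)²·1{s+P'K ≤ 0}]
+ E[b⁻(s+P'K)²·1{s+P'K > 0}]`, with `K'E[PP']K = E[(P'K)²]`. -/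
noncomputable def betaMinus {Ω : Type*} [MeasurableSpace Ω] (ℙ : Measure Ω) {n : ℕ}
    (P : Ω → EuclideanSpace ℝ (Fin n)) (s ρ' ap am bp bm : ℝ)
    (K : EuclideanSpace ℝ (Fin n)) : ℝ :=
  let pk : Ω → ℝ := fun ω => inner ℝ (P ω) K
  ρ' ^ 2 * (∫ ω, (pk ω) ^ 2 ∂ℙ) +
  2 * ρ' * (∫ ω, ap * (s + pk ω) * pk ω * (if s + pk ω ≤ 0 then (1:ℝ) else 0) ∂ℙ) +
  2 * ρ' * (∫ ω, am * (s + pk ω) * pk ω * (if 0 < s + pk ω then (1:ℝ) else 0) ∂ℙ) +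
  (∫ ω, bp * (s + pk ω) ^ 2 * (if s + pk ω ≤ 0 then (1:ℝ) else 0) ∂ℙ) +
  (∫ ω, bm * (s + pk ω) ^ 2 * (if 0 < s + pk ω then (1:ℝ) else 0) ∂ℙ)

section

variable {Ω : Type*} [MeasurableSpace Ω] {μ : Measure Ω}

theorem sq_integral_le_integral_of_sq_le [IsProbabilityMeasure μ] {X Z : Ω → ℝ}
    (hX : AEStronglyMeasurable X μ) (hZ : Integrable Z μ) (hXZ : ∀ ω, X ω ^ 2 ≤ Z ω) :
    (∫ ω, X ω ∂μ) ^ 2 ≤ ∫ ω, Z ω ∂μ := by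
  have hX2 : Integrable (fun ω => X ω ^ 2) μ :=
    hZ.mono' (hX.pow 2) (ae_of_all _ fun ω => by simpa using hXZ ω)
  have hvar := ProbabilityTheory.variance_nonneg X μ
  rw [ProbabilityTheory.variance_eq_sub ((memLp_two_iff_integrable_sq hX).2 hX2)] at hvar
  calc (∫ ω, X ω ∂μ) ^ 2 ≤ ∫ ω, X ω ^ 2 ∂μ := by simpa using hvar
    _ ≤ ∫ ω, Z ω ∂μ := integral_mono hX2 hZ hXZ

theorem MeasureTheory.Integrable.mul_ite_one_zero {F : Ω → ℝ} (hF : Integrable F μ)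
    {p : Ω → Prop} [DecidablePred p] (hp : MeasurableSet {ω | p ω}) :
    Integrable (fun ω => F ω * if p ω then 1 else 0) μ :=
  hF.mul_bdd (c := 1) (Measurable.ite hp measurable_const measurable_const).aestronglyMeasurable
    (ae_of_all _ fun ω => by split_ifs <;> simp)

theorem sq_add_mul_le_of_sq_le {a b c x y : ℝ} (hab : a ^ 2 ≤ b) :
    (c * x + a * y) ^ 2 ≤ c ^ 2 * x ^ 2 + 2 * c * (a * y * x) + b * y ^ 2 := by
  nlinarith [mul_le_mul_of_nonneg_right hab (sq_nonneg y)]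

theorem sq_mean_le_second_moment_of_compl [IsProbabilityMeasure μ] {f : Ω → ℝ}
    (hf : MemLp f 2 μ) {p q : Ω → Prop} [DecidablePred p] [DecidablePred q]
    (hp : MeasurableSet {ω | p ω}) (hpq : ∀ ω, q ω ↔ ¬p ω)
    {s ρ' ap am bp bm : ℝ} (hbp : ap ^ 2 ≤ bp) (hbm : am ^ 2 ≤ bm) :
    0 ≤ (ρ' ^ 2 * (∫ ω, f ω ^ 2 ∂μ) +
      2 * ρ' * (∫ ω, ap * (s + f ω) * f ω * (if p ω then (1:ℝ) else 0) ∂μ) +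
      2 * ρ' * (∫ ω, am * (s + f ω) * f ω * (if q ω then (1:ℝ) else 0) ∂μ) +
      (∫ ω, bp * (s + f ω) ^ 2 * (if p ω then (1:ℝ) else 0) ∂μ) +
      (∫ ω, bm * (s + f ω) ^ 2 * (if q ω then (1:ℝ) else 0) ∂μ)) -
      (ρ' * (∫ ω, f ω ∂μ) + (∫ ω, ap * (s + f ω) * (if p ω then (1:ℝ) else 0) ∂μ) +
        (∫ ω, am * (s + f ω) * (if q ω then (1:ℝ) else 0) ∂μ)) ^ 2 := by
  set χ₁ : Ω → ℝ := fun ω => if p ω then 1 else 0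
  set χ₂ : Ω → ℝ := fun ω => if q ω then 1 else 0
  have hq : MeasurableSet {ω | q ω} := by simpa only [hpq, Set.compl_ofPred] using hp.compl
  have hf₁ := hf.integrable one_le_two
  have hf₂ := hf.integrable_sq
  have hY : MemLp (fun ω => s + f ω) 2 μ := (memLp_const s).add hf
  have i₁ : Integrable (fun ω => ap * (s + f ω) * χ₁ ω) μ :=
    ((hY.integrable one_le_two).const_mul ap).mul_ite_one_zero hp
  have i₂ : Integrable (fun ω => am * (s + f ω) * χ₂ ω) μ :=
    ((hY.integrable one_le_two).const_mul am).mul_ite_one_zero hq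
  have i₃ : Integrable (fun ω => ap * (s + f ω) * f ω * χ₁ ω) μ :=
    ((hY.const_mul ap).integrable_mul hf).mul_ite_one_zero hp
  have i₄ : Integrable (fun ω => am * (s + f ω) * f ω * χ₂ ω) μ :=
    ((hY.const_mul am).integrable_mul hf).mul_ite_one_zero hq
  have i₅ : Integrable (fun ω => bp * (s + f ω) ^ 2 * χ₁ ω) μ :=
    (hY.integrable_sq.const_mul bp).mul_ite_one_zero hp
  have i₆ : Integrable (fun ω => bm * (s + f ω) ^ 2 * χ₂ ω) μ :=
    (hY.integrable_sq.const_mul bm).mul_ite_one_zero hq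
  have hmean : ∫ ω, ρ' * f ω + ap * (s + f ω) * χ₁ ω + am * (s + f ω) * χ₂ ω ∂μ =
      ρ' * (∫ ω, f ω ∂μ) + (∫ ω, ap * (s + f ω) * χ₁ ω ∂μ) +
        (∫ ω, am * (s + f ω) * χ₂ ω ∂μ) := by
    rw [integral_add (by fun_prop) i₂, integral_add (by fun_prop) i₁, integral_const_mul]
  have hmoment : ∫ ω, ρ' ^ 2 * f ω ^ 2 + 2 * ρ' * (ap * (s + f ω) * f ω * χ₁ ω) +
        2 * ρ' * (am * (s + f ω) * f ω * χ₂ ω) + bp * (s + f ω) ^ 2 * χ₁ ω +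
        bm * (s + f ω) ^ 2 * χ₂ ω ∂μ =
      ρ' ^ 2 * (∫ ω, f ω ^ 2 ∂μ) + 2 * ρ' * (∫ ω, ap * (s + f ω) * f ω * χ₁ ω ∂μ) +
        2 * ρ' * (∫ ω, am * (s + f ω) * f ω * χ₂ ω ∂μ) +
        (∫ ω, bp * (s + f ω) ^ 2 * χ₁ ω ∂μ) + (∫ ω, bm * (s + f ω) ^ 2 * χ₂ ω ∂μ) := by
    rw [integral_add (by fun_prop) i₆, integral_add (by fun_prop) i₅,
      integral_add (by fun_prop) (by fun_prop), integral_add (by fun_prop) (by fun_prop),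
      integral_const_mul, integral_const_mul, integral_const_mul]
  rw [sub_nonneg, ← hmean, ← hmoment]
  refine sq_integral_le_integral_of_sq_le (by fun_prop) (by fun_prop) fun ω => ?_
  by_cases h : p ω <;> simp only [χ₁, χ₂, hpq, h, if_true, if_false, not_true, not_false_eq_true,
    mul_one, mul_zero, add_zero]
  · exact sq_add_mul_le_of_sq_le hbp
  · exact sq_add_mul_le_of_sq_le hbm

end

theorem beta_sub_alpha_sq_nonneg_general {Ω : Type*} [MeasurableSpace Ω] (ℙ : Measure Ω)
    [IsProbabilityMeasure ℙ] {n : ℕ}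
    (P : Ω → EuclideanSpace ℝ (Fin n)) (hmeas : Measurable P)
    (hL2 : Integrable (fun ω => ‖P ω‖ ^ 2) ℙ)
    (s ρ' ap am bp bm : ℝ)
    (hbp : ap ^ 2 ≤ bp) (hbm : am ^ 2 ≤ bm) :
    ∀ K : EuclideanSpace ℝ (Fin n),
      0 ≤ betaPlus ℙ P s ρ' ap am bp bm K - (alphaPlus ℙ P s ρ' ap am K) ^ 2 ∧
      0 ≤ betaMinus ℙ P s ρ' ap am bp bm K - (alphaMinus ℙ P s ρ' ap am K) ^ 2 := by
  intro K
  have hPK : MemLp (fun ω => inner ℝ (P ω) K) 2 ℙ :=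
    ((memLp_two_iff_integrable_sq_norm hmeas.aestronglyMeasurable).2 hL2).inner_const K
  have hY : Measurable fun ω => s + inner ℝ (P ω) K := by fun_prop
  exact ⟨sq_mean_le_second_moment_of_compl hPK (measurableSet_le measurable_const hY)
      (fun _ => not_le.symm) hbp hbm,
    sq_mean_le_second_moment_of_compl hPK (measurableSet_le hY measurable_const)
      (fun _ => not_le.symm) hbp hbm⟩

/-- If `b⁺ ≥ (a⁺)²` and `b⁻ ≥ (a⁻)²`, then for every `K ∈ ℝⁿ` one has
`β⁺(K) − (α⁺(K))² ≥ 0` and `β⁻(K) − (α⁻(K))² ≥ 0`. -/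
theorem beta_sub_alpha_sq_nonneg {Ω : Type*} [MeasurableSpace Ω] (ℙ : Measure Ω)
    [IsProbabilityMeasure ℙ] {n : ℕ} (hn : 1 ≤ n)
    (P : Ω → EuclideanSpace ℝ (Fin n)) (hmeas : Measurable P)
    (hL2 : Integrable (fun ω => ‖P ω‖ ^ 2) ℙ)
    (s ρ' ap am bp bm : ℝ) (hs : 0 < s) (hρ : 0 < ρ')
    (hbp : ap ^ 2 ≤ bp) (hbm : am ^ 2 ≤ bm) :
    ∀ K : EuclideanSpace ℝ (Fin n),
      0 ≤ betaPlus ℙ P s ρ' ap am bp bm K - (alphaPlus ℙ P s ρ' ap am K) ^ 2 ∧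
      0 ≤ betaMinus ℙ P s ρ' ap am bp bm K - (alphaMinus ℙ P s ρ' ap am K) ^ 2 :=
  beta_sub_alpha_sq_nonneg_general ℙ P hmeas hL2 s ρ' ap am bp bm hbp hbm
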